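/- arXiv:2411.10165 — 5 statements merged into one kernel-verified Lean document; each statement's English description precedes it below -/
import Mathlib

section
/- Let R be a commutative ring containing ℚ and let M be a module over the polynomial ring R[x₁,…,xₙ] equipped with an integrable R-linear connection ∇ = (∇₁,…,∇ₙ), i.e. commuting R-linear endomorphisms satisfying the Leibniz rule ∇ᵢ(f·m) = (∂f/∂xᵢ)·m + f·∇ᵢ(m). If the connection is nilpotent (each ∇ᵢ acts locally nilpotently on M), then the natural map M^{∇=0} ⊗_R R[x₁,…,xₙ] → M is an isomorphism of R[x₁,…,xₙ]-modules. -/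
open MvPolynomial

/-- The `R`-submodule of flat sections of a connection `D` on a module `M` over
the polynomial ring `R[x₁,…,xₙ]`. -/
def flatSections {R : Type*} [CommRing R] (n : ℕ)
    {M : Type*} [AddCommGroup M] [Module (MvPolynomial (Fin n) R) M]
    [Module R M] [IsScalarTower R (MvPolynomial (Fin n) R) M]
    (D : Fin n → M →+ M)
    (hleib : ∀ i (f : MvPolynomial (Fin n) R) (m : M),
      D i (f • m) = (MvPolynomial.pderiv i f) • m + f • D i m) :
    Submodule R M where
  carrier := {m | ∀ i, D i m = 0}
  add_mem' := by
    intro a b ha hb i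
    simp [map_add, ha i, hb i]
  zero_mem' := by intro i; simp
  smul_mem' := by
    intro r m hm i
    have : r • m = (MvPolynomial.C r : MvPolynomial (Fin n) R) • m := by
      rw [← algebraMap_smul (MvPolynomial (Fin n) R) r m]
      rfl
    rw [this, hleib i, hm i]
    simp

set_option linter.unusedSectionVars false
set_option linter.unusedVariables false
open Finset
open scoped TensorProduct

section Aux
variable {R : Type*} [CommRing R] [Algebra ℚ R] {n : ℕ}
  {M : Type*} [AddCommGroup M] [Module (MvPolynomial (Fin n) R) M]
  [Module R M] [IsScalarTower R (MvPolynomial (Fin n) R) M]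

lemma aux_qsmul_cancel (R : Type*) [CommRing R] [Algebra ℚ R] {M : Type*} [AddCommGroup M]
    [Module R M] (q : ℚ) (hq : q ≠ 0) (m : M) (h : algebraMap ℚ R q • m = 0) : m = 0 := by
  have h2 := congrArg (fun x => algebraMap ℚ R q⁻¹ • x) h
  simpa [smul_smul, ← map_mul, inv_mul_cancel₀ hq] using h2

lemma aux_nsmul_cancel (R : Type*) [CommRing R] [Algebra ℚ R] {M : Type*} [AddCommGroup M]
    [Module R M] (k : ℕ) (hk : k ≠ 0) (m : M) (h : k • m = 0) : m = 0 := by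
  have h' : algebraMap ℚ R (k : ℚ) • m = 0 := by
    rw [map_natCast, Nat.cast_smul_eq_nsmul, h]
  exact aux_qsmul_cancel R _ (by exact_mod_cast hk) m h'

/-- `(-x_i)^k / k!` -/
noncomputable def cpoly (R : Type*) [CommRing R] [Algebra ℚ R] {n : ℕ} (i : Fin n) (k : ℕ) :
    MvPolynomial (Fin n) R :=
  C (algebraMap ℚ R ((-1) ^ k * (k.factorial : ℚ)⁻¹)) * X i ^ k

/-- `x_i^k / k!` -/
noncomputable def bpoly (R : Type*) [CommRing R] [Algebra ℚ R] {n : ℕ} (i : Fin n) (k : ℕ) :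
    MvPolynomial (Fin n) R :=
  C (algebraMap ℚ R ((k.factorial : ℚ)⁻¹)) * X i ^ k

lemma pderiv_cpoly_zero (i : Fin n) : pderiv i (cpoly R i 0) = 0 := by
  simp [cpoly, pderiv_C]

lemma pderiv_cpoly_succ (i : Fin n) (k : ℕ) :
    pderiv i (cpoly R i (k+1)) = - cpoly R i k := by
  rw [cpoly, pderiv_C_mul, pderiv_pow, pderiv_X_self, mul_one, Nat.add_sub_cancel]
  rw [show ((k+1 : ℕ) : MvPolynomial (Fin n) R) = C (((k+1 : ℕ) : ℕ) : R) from (map_natCast (C : R →+* MvPolynomial (Fin n) R) (k+1)).symm]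
  rw [← mul_assoc, ← C_mul, cpoly, ← neg_mul, ← map_neg]
  congr 2
  rw [← map_natCast (algebraMap ℚ R), ← map_mul, ← map_neg]
  congr 1
  rw [Nat.factorial_succ]
  push_cast
  have h1 : (k.factorial : ℚ) ≠ 0 := by exact_mod_cast k.factorial_ne_zero
  field_simp
  ring

lemma pderiv_cpoly_ne (i j : Fin n) (h : j ≠ i) (k : ℕ) : pderiv j (cpoly R i k) = 0 := by
  rw [cpoly, pderiv_C_mul, pderiv_pow, pderiv_X_of_ne h.symm, mul_zero, mul_zero]

end Aux
/-- The "flat projection along variable `i`": `∑_{k<K} (-x_i)^k/k! • Dᵢᵏ m`. -/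
noncomputable def Ppart (R : Type*) [CommRing R] [Algebra ℚ R] {n : ℕ} {M : Type*}
    [AddCommGroup M] [Module (MvPolynomial (Fin n) R) M]
    (D : Fin n → M →+ M) (i : Fin n) (K : ℕ) (m : M) : M :=
  ∑ k ∈ Finset.range K, cpoly R i k • (D i)^[k] m

section Aux2
variable {R : Type*} [CommRing R] [Algebra ℚ R] {n : ℕ}
  {M : Type*} [AddCommGroup M] [Module (MvPolynomial (Fin n) R) M]
  [Module R M] [IsScalarTower R (MvPolynomial (Fin n) R) M]
  (D : Fin n → M →+ M)

lemma aux_iter_comm (hcomm : ∀ i j, (D i).comp (D j) = (D j).comp (D i))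
    (i j : Fin n) (k : ℕ) (m : M) : D j ((D i)^[k] m) = (D i)^[k] (D j m) := by
  induction k generalizing m with
  | zero => rfl
  | succ k ih =>
    have hc := DFunLike.congr_fun (hcomm i j) m
    simp only [AddMonoidHom.comp_apply] at hc
    rw [Function.iterate_succ_apply, Function.iterate_succ_apply, ih, ← hc]

lemma aux_iterate_sum {β : Type*} (g : M →+ M) (K : ℕ) (s : Finset β) (f : β → M) :
    g^[K] (∑ x ∈ s, f x) = ∑ x ∈ s, g^[K] (f x) := by
  induction K with
  | zero => rfl
  | succ K ih =>
    rw [Function.iterate_succ_apply', ih, map_sum]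
    exact Finset.sum_congr rfl fun x _ => (Function.iterate_succ_apply' g K (f x)).symm

lemma aux_iterate_zero (g : M →+ M) (K : ℕ) : g^[K] (0 : M) = 0 :=
  Function.iterate_fixed (map_zero g) K

lemma Ppart_flat_self
    (hleib : ∀ i (f : MvPolynomial (Fin n) R) (m : M),
      D i (f • m) = (MvPolynomial.pderiv i f) • m + f • D i m)
    (i : Fin n) (K : ℕ) (m : M) (h : (D i)^[K] m = 0) :
    D i (Ppart R D i K m) = 0 := by
  rw [Ppart, map_sum]
  have hterm : ∀ k, D i (cpoly R i k • (D i)^[k] m)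
      = pderiv i (cpoly R i k) • (D i)^[k] m + cpoly R i k • (D i)^[k+1] m := by
    intro k
    rw [hleib, Function.iterate_succ_apply']
  rw [Finset.sum_congr rfl fun k _ => hterm k, Finset.sum_add_distrib]
  cases K with
  | zero => simp
  | succ K =>
    rw [Finset.sum_range_succ' (fun k => pderiv i (cpoly R i k) • (D i)^[k] m),
      Finset.sum_range_succ (fun k => cpoly R i k • (D i)^[k+1] m)]
    simp only [pderiv_cpoly_zero, zero_smul, add_zero, h, smul_zero]
    rw [Finset.sum_congr rfl (fun k _ => by rw [pderiv_cpoly_succ])]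
    simp [neg_smul, Finset.sum_neg_distrib]

lemma Ppart_flat_other
    (hcomm : ∀ i j, (D i).comp (D j) = (D j).comp (D i))
    (hleib : ∀ i (f : MvPolynomial (Fin n) R) (m : M),
      D i (f • m) = (MvPolynomial.pderiv i f) • m + f • D i m)
    (i j : Fin n) (hij : j ≠ i) (K : ℕ) (m : M) (hm : D j m = 0) :
    D j (Ppart R D i K m) = 0 := by
  rw [Ppart, map_sum]
  refine Finset.sum_eq_zero fun k _ => ?_
  rw [hleib, pderiv_cpoly_ne i j hij, zero_smul, zero_add,
    aux_iter_comm D hcomm i j k m, hm, aux_iterate_zero, smul_zero]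

end Aux2
lemma aux_sum_tri {A : Type*} [AddCommMonoid A] (K : ℕ) (F : ℕ → ℕ → A)
    (hF : ∀ j k, K ≤ j + k → F j k = 0) :
    ∑ k ∈ Finset.range K, ∑ j ∈ Finset.range K, F j k
      = ∑ N ∈ Finset.range K, ∑ j ∈ Finset.range (N+1), F j (N - j) := by
  have step1 : ∀ k ∈ Finset.range K,
      ∑ j ∈ Finset.range K, F j k = ∑ j ∈ Finset.range (K - k), F j k := by
    intro k hk
    refine (Finset.sum_subset (Finset.range_subset_range.mpr (Nat.sub_le K k)) ?_).symm
    intro j hj hj'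
    exact hF j k (by simp only [Finset.mem_range] at hj hj' ⊢; omega)
  rw [Finset.sum_congr rfl step1, Finset.sum_sigma', Finset.sum_sigma']
  refine Finset.sum_nbij' (fun p => ⟨p.2 + p.1, p.2⟩) (fun p => ⟨p.1 - p.2, p.2⟩)
    ?_ ?_ ?_ ?_ ?_
  · rintro ⟨k, j⟩ hp
    simp only [Finset.mem_sigma, Finset.mem_range] at hp ⊢
    omega
  · rintro ⟨N, j⟩ hp
    simp only [Finset.mem_sigma, Finset.mem_range] at hp ⊢
    omega
  · rintro ⟨k, j⟩ hp
    simp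
  · rintro ⟨N, j⟩ hp
    simp only [Finset.mem_sigma, Finset.mem_range] at hp
    simp only [Sigma.mk.inj_iff, heq_eq_eq, and_true]
    omega
  · rintro ⟨k, j⟩ hp
    simp

lemma aux_rat_sum (N : ℕ) :
    ∑ j ∈ Finset.range (N+1), (-1:ℚ) ^ j * (j.factorial : ℚ)⁻¹ * ((N-j).factorial : ℚ)⁻¹
      = if N = 0 then 1 else 0 := by
  have key : ∑ j ∈ Finset.range (N+1), (-1:ℚ) ^ j * (N.choose j : ℚ)
      = if N = 0 then 1 else 0 := by
    have := Int.alternating_sum_range_choose (n := N)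
    exact_mod_cast this
  have hfac : ∀ j ∈ Finset.range (N+1),
      (-1:ℚ) ^ j * (j.factorial : ℚ)⁻¹ * ((N-j).factorial : ℚ)⁻¹
        = (N.factorial : ℚ)⁻¹ * ((-1:ℚ) ^ j * (N.choose j : ℚ)) := by
    intro j hj
    simp only [Finset.mem_range] at hj
    rw [Nat.cast_choose ℚ (by omega : j ≤ N)]
    have h1 : (j.factorial : ℚ) ≠ 0 := by exact_mod_cast j.factorial_ne_zero
    have h2 : ((N-j).factorial : ℚ) ≠ 0 := by exact_mod_cast (N-j).factorial_ne_zero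
    have h3 : (N.factorial : ℚ) ≠ 0 := by exact_mod_cast N.factorial_ne_zero
    field_simp
  rw [Finset.sum_congr rfl hfac, ← Finset.mul_sum, key]
  by_cases hN : N = 0
  · subst hN; simp [Nat.factorial]
  · simp [hN]
section Aux3
variable {R : Type*} [CommRing R] [Algebra ℚ R] {n : ℕ}
  {M : Type*} [AddCommGroup M] [Module (MvPolynomial (Fin n) R) M]
  [Module R M] [IsScalarTower R (MvPolynomial (Fin n) R) M]
  (D : Fin n → M →+ M)

lemma Ppart_recon
    (hleib : ∀ i (f : MvPolynomial (Fin n) R) (m : M),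
      D i (f • m) = (MvPolynomial.pderiv i f) • m + f • D i m)
    (i : Fin n) (K : ℕ) (m : M) (h : (D i)^[K] m = 0) :
    ∑ k ∈ Finset.range K, bpoly R i k • Ppart R D i K ((D i)^[k] m) = m := by
  classical
  cases K with
  | zero => simpa using h.symm
  | succ K =>
  set F : ℕ → ℕ → M := fun j k =>
    (C (algebraMap ℚ R ((-1)^j * (j.factorial:ℚ)⁻¹ * (k.factorial:ℚ)⁻¹))
      * X i ^ (j+k)) • (D i)^[j+k] m with hF
  have hbc : ∀ j k : ℕ, bpoly R i k * cpoly R i j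
      = C (algebraMap ℚ R ((-1)^j * (j.factorial:ℚ)⁻¹ * (k.factorial:ℚ)⁻¹)) * X i ^ (j+k) := by
    intro j k
    rw [bpoly, cpoly, mul_mul_mul_comm, ← C_mul, ← map_mul]
    congr 1
    · exact congrArg C (congrArg _ (by ring))
    · rw [pow_add, mul_comm]
  have hstepA : ∀ k : ℕ, bpoly R i k • Ppart R D i (K+1) ((D i)^[k] m)
      = ∑ j ∈ Finset.range (K+1), F j k := by
    intro k
    rw [Ppart, Finset.smul_sum]
    refine Finset.sum_congr rfl fun j _ => ?_
    rw [smul_smul, hbc, ← Function.iterate_add_apply]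
  have hFzero : ∀ j k, K + 1 ≤ j + k → F j k = 0 := by
    intro j k hjk
    have : (D i)^[j+k] m = 0 := by
      rw [show j + k = (j + k - (K+1)) + (K+1) by omega, Function.iterate_add_apply, h,
        aux_iterate_zero]
    rw [hF]
    simp only [this, smul_zero]
  rw [Finset.sum_congr rfl fun k _ => hstepA k]
  rw [show ∑ k ∈ Finset.range (K+1), ∑ j ∈ Finset.range (K+1), F j k
      = ∑ N ∈ Finset.range (K+1), ∑ j ∈ Finset.range (N+1), F j (N - j) from
    aux_sum_tri (K+1) F hFzero]
  have hinner : ∀ N ∈ Finset.range (K+1), ∑ j ∈ Finset.range (N+1), F j (N - j)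
      = algebraMap ℚ R (if N = 0 then 1 else 0) • ((X i ^ N : MvPolynomial (Fin n) R) • (D i)^[N] m) := by
    intro N _
    have hterm : ∀ j ∈ Finset.range (N+1), F j (N - j)
        = algebraMap ℚ R ((-1)^j * (j.factorial:ℚ)⁻¹ * ((N-j).factorial:ℚ)⁻¹)
            • ((X i ^ N : MvPolynomial (Fin n) R) • (D i)^[N] m) := by
      intro j hj
      simp only [Finset.mem_range] at hj
      rw [hF]
      simp only [show j + (N - j) = N by omega]
      rw [mul_smul, ← MvPolynomial.algebraMap_eq, algebraMap_smul]
    rw [Finset.sum_congr rfl hterm, ← Finset.sum_smul, ← map_sum, aux_rat_sum]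
  rw [Finset.sum_congr rfl hinner]
  rw [Finset.sum_eq_single_of_mem 0 (Finset.mem_range.mpr (Nat.succ_pos K))
    (fun N _ hN => by rw [if_neg hN, map_zero, zero_smul])]
  simp

end Aux3
section Aux4
variable {R : Type*} [CommRing R] [Algebra ℚ R] {n : ℕ}
  {M : Type*} [AddCommGroup M] [Module (MvPolynomial (Fin n) R) M]
  [Module R M] [IsScalarTower R (MvPolynomial (Fin n) R) M]
  (D : Fin n → M →+ M)

lemma aux_iter_smul_pow
    (hleib : ∀ i (f : MvPolynomial (Fin n) R) (m : M),
      D i (f • m) = (MvPolynomial.pderiv i f) • m + f • D i m)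
    (i : Fin n) (v : M) (hv : D i v = 0) (k j : ℕ) :
    (D i)^[j] ((X i ^ k : MvPolynomial (Fin n) R) • v)
      = (k.descFactorial j) • ((X i ^ (k - j) : MvPolynomial (Fin n) R) • v) := by
  induction j with
  | zero => simp
  | succ j ih =>
    rw [Function.iterate_succ_apply', ih, map_nsmul, hleib, hv, smul_zero, add_zero,
      pderiv_pow, pderiv_X_self, mul_one]
    rw [show ((k - j : ℕ) : MvPolynomial (Fin n) R) * X i ^ (k - j - 1)
        = ((k - j : ℕ) : MvPolynomial (Fin n) R) • (X i ^ (k - j - 1)) from rfl]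
    rw [smul_assoc, Nat.cast_smul_eq_nsmul, smul_smul, Nat.descFactorial_succ,
      Nat.sub_sub, Nat.mul_comm]

lemma aux_indep1
    (hleib : ∀ i (f : MvPolynomial (Fin n) R) (m : M),
      D i (f • m) = (MvPolynomial.pderiv i f) • m + f • D i m)
    (i : Fin n) :
    ∀ (K : ℕ) (v : ℕ → M), (∀ k, D i (v k) = 0) →
      (∑ k ∈ Finset.range K, (X i ^ k : MvPolynomial (Fin n) R) • v k) = 0 →
      ∀ k < K, v k = 0 := by
  intro K
  induction K with
  | zero => intro v _ _ k hk; omega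
  | succ K ih =>
    intro v hv hsum k hk
    have hK : v K = 0 := by
      have h0 := congrArg (fun x => (D i)^[K] x) hsum
      simp only [aux_iterate_sum, aux_iterate_zero] at h0
      rw [Finset.sum_congr rfl (fun k _ => aux_iter_smul_pow D hleib i (v k) (hv k) k K)] at h0
      rw [Finset.sum_range_succ] at h0
      rw [Finset.sum_eq_zero (fun k hk => by
        rw [Nat.descFactorial_eq_zero_iff_lt.mpr (Finset.mem_range.mp hk), zero_smul])] at h0
      rw [zero_add, Nat.descFactorial_self, Nat.sub_self, pow_zero, one_smul] at h0
      exact aux_nsmul_cancel R K.factorial K.factorial_ne_zero _ h0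
    rcases Nat.lt_succ_iff_lt_or_eq.mp hk with hk' | hk'
    · refine ih v hv ?_ k hk'
      rw [Finset.sum_range_succ, hK, smul_zero, add_zero] at hsum
      exact hsum
    · rw [hk']; exact hK

lemma aux_indepn
    (hleib : ∀ i (f : MvPolynomial (Fin n) R) (m : M),
      D i (f • m) = (MvPolynomial.pderiv i f) • m + f • D i m) :
    ∀ (t : Finset (Fin n)) (s : Finset ((Fin n) →₀ ℕ)),
      (∀ α ∈ s, α.support ⊆ t) →
      ∀ (u : ((Fin n) →₀ ℕ) → M), (∀ α i, D i (u α) = 0) →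
      (∑ α ∈ s, (monomial α (1:R)) • u α) = 0 → ∀ α ∈ s, u α = 0 := by
  classical
  intro t
  induction t using Finset.induction_on with
  | empty =>
    intro s hs u hu hsum α hα
    have hα0 : α = 0 := by
      ext j
      by_contra hj
      exact absurd (hs α hα (Finsupp.mem_support_iff.mpr hj)) (Finset.notMem_empty j)
    have : s = {0} := by
      apply Finset.eq_singleton_iff_unique_mem.mpr
      refine ⟨hα0 ▸ hα, fun β hβ => ?_⟩
      ext j
      by_contra hj
      exact absurd (hs β hβ (Finsupp.mem_support_iff.mpr hj)) (Finset.notMem_empty j)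
    rw [this, Finset.sum_singleton] at hsum
    rw [hα0]
    simpa using hsum
  | @insert i t' hi ih =>
    intro s hs u hu hsum α hα
    set K : ℕ := (s.sup fun β => β i) + 1 with hK
    set v : ℕ → M := fun k => ∑ β ∈ s.filter (fun β => β i = k),
      (monomial (β.erase i) (1:R)) • u β with hv
    have hvflat : ∀ k, D i (v k) = 0 := by
      intro k
      rw [hv, map_sum]
      refine Finset.sum_eq_zero fun β _ => ?_
      rw [hleib, hu, smul_zero, add_zero, pderiv_monomial]
      simp [Finsupp.erase_same]
    have hdecomp : ∑ k ∈ Finset.range K, (X i ^ k : MvPolynomial (Fin n) R) • v k = 0 := by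
      rw [hv]
      calc ∑ k ∈ Finset.range K, (X i ^ k : MvPolynomial (Fin n) R) •
            ∑ β ∈ s.filter (fun β => β i = k), (monomial (β.erase i) (1:R)) • u β
          = ∑ k ∈ Finset.range K, ∑ β ∈ s.filter (fun β => β i = k),
            (monomial β (1:R)) • u β := by
            refine Finset.sum_congr rfl fun k _ => ?_
            rw [Finset.smul_sum]
            refine Finset.sum_congr rfl fun β hβ => ?_
            rw [smul_smul, X_pow_eq_monomial, monomial_mul, mul_one,
              ← (Finset.mem_filter.mp hβ).2, Finsupp.single_add_erase]
        _ = ∑ β ∈ s, (monomial β (1:R)) • u β := by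
            apply Finset.sum_fiberwise_of_maps_to
            intro β hβ
            exact Finset.mem_range.mpr (Nat.lt_succ_of_le (Finset.le_sup (f := fun β => β i) hβ))
        _ = 0 := hsum
    have hvzero : ∀ k < K, v k = 0 := aux_indep1 D hleib i K v hvflat hdecomp
    -- now fix α ∈ s, let k := α i
    have hk : α i < K := Nat.lt_succ_of_le (Finset.le_sup (f := fun β => β i) hα)
    have hv0 := hvzero (α i) hk
    rw [hv] at hv0
    -- reindex the fiber sum over erased multi-indices
    set sk := s.filter (fun β => β i = α i) with hsk
    have hinj : ∀ β ∈ sk, ∀ γ ∈ sk, β.erase i = γ.erase i → β = γ := by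
      intro β hβ γ hγ he
      have hβ2 := (Finset.mem_filter.mp hβ).2
      have hγ2 := (Finset.mem_filter.mp hγ).2
      rw [← Finsupp.single_add_erase i β, ← Finsupp.single_add_erase i γ, he, hβ2, hγ2]
    have himg : ∑ γ ∈ sk.image (fun β => β.erase i),
        (monomial γ (1:R)) • u (γ + Finsupp.single i (α i)) = 0 := by
      rw [Finset.sum_image hinj]
      rw [← hv0]
      refine Finset.sum_congr rfl fun β hβ => ?_
      congr 1
      have hβ2 := (Finset.mem_filter.mp hβ).2
      rw [← hβ2, add_comm, Finsupp.single_add_erase]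
    have := ih (sk.image (fun β => β.erase i)) ?_ (fun γ => u (γ + Finsupp.single i (α i)))
      (fun γ j => hu _ j) himg (α.erase i) ?_
    · rw [add_comm, Finsupp.single_add_erase] at this
      exact this
    · intro γ hγ
      obtain ⟨β, hβ, rfl⟩ := Finset.mem_image.mp hγ
      rw [Finsupp.support_erase]
      intro j hj
      have hj1 := Finset.mem_erase.mp hj
      have := hs β (Finset.mem_filter.mp hβ).1 hj1.2
      rcases Finset.mem_insert.mp this with h | h
      · exact absurd h hj1.1
      · exact h
    · exact Finset.mem_image.mpr ⟨α, Finset.mem_filter.mpr ⟨hα, rfl⟩, rfl⟩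

end Aux4
/-- for a nilpotent integrable connection over a `ℚ`-algebra `R`,
the natural map `M^{D=0} ⊗_R R[x₁,…,xₙ] → M`, `m ⊗ f ↦ f • m`, is an isomorphism. -/
theorem nilpotent_connection_flat_sections_tensor_iso
    {R : Type*} [CommRing R] [Algebra ℚ R] (n : ℕ)
    {M : Type*} [AddCommGroup M] [Module (MvPolynomial (Fin n) R) M]
    [Module R M] [IsScalarTower R (MvPolynomial (Fin n) R) M]
    (D : Fin n → M →+ M)
    (hlin : ∀ i (r : R) (m : M), D i (r • m) = r • D i m)
    (hcomm : ∀ i j, (D i).comp (D j) = (D j).comp (D i))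
    (hleib : ∀ i (f : MvPolynomial (Fin n) R) (m : M),
      D i (f • m) = (MvPolynomial.pderiv i f) • m + f • D i m)
    (hnilp : ∀ (m : M) i, ∃ k, (D i)^[k] m = 0) :
    Function.Bijective
      (TensorProduct.lift
        (LinearMap.mk₂ R
          (fun (m : flatSections n D hleib) (f : MvPolynomial (Fin n) R) => f • (m : M))
          (fun m m' f => by simp [smul_add])
          (fun r m f => (smul_comm r f (m : M)).symm)
          (fun m f f' => by simp [add_smul])
          (fun r m f => smul_assoc r f (m : M)))) := by
  classical
  set FS := flatSections n D hleib with hFS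
  set φ := (TensorProduct.lift
        (LinearMap.mk₂ R
          (fun (m : FS) (f : MvPolynomial (Fin n) R) => f • (m : M))
          (fun m m' f => by simp [smul_add])
          (fun r m f => (smul_comm r f (m : M)).symm)
          (fun m f f' => by simp [add_smul])
          (fun r m f => smul_assoc r f (m : M)))) with hφ
  have hphi : ∀ (u : FS) (f : MvPolynomial (Fin n) R), φ (u ⊗ₜ[R] f) = f • (u : M) := by
    intro u f
    rw [hφ, TensorProduct.lift.tmul, LinearMap.mk₂_apply]
  constructor
  · -- injectivity
    have hrep : ∀ t : FS ⊗[R] MvPolynomial (Fin n) R,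
        ∃ (s : Finset (Fin n →₀ ℕ)) (u : (Fin n →₀ ℕ) → FS),
          t = ∑ α ∈ s, u α ⊗ₜ[R] (monomial α (1:R)) := by
      intro t
      induction t using TensorProduct.induction_on with
      | zero => exact ⟨∅, fun _ => 0, by simp⟩
      | tmul m f =>
        refine ⟨f.support, fun α => coeff α f • m, ?_⟩
        conv_lhs => rw [← support_sum_monomial_coeff f]
        rw [TensorProduct.tmul_sum]
        refine Finset.sum_congr rfl fun α hα => ?_
        have hmono : (monomial α) (coeff α f) = coeff α f • (monomial α (1:R)) := by
          rw [MvPolynomial.smul_monomial, smul_eq_mul, mul_one]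
        rw [hmono, ← TensorProduct.smul_tmul]
      | add x y ihx ihy =>
        obtain ⟨s1, u1, rfl⟩ := ihx
        obtain ⟨s2, u2, rfl⟩ := ihy
        refine ⟨s1 ∪ s2, fun α =>
          (if α ∈ s1 then u1 α else 0) + (if α ∈ s2 then u2 α else 0), ?_⟩
        have key : ∀ (sa sb : Finset (Fin n →₀ ℕ)) (w : (Fin n →₀ ℕ) → FS),
            ∑ α ∈ sa, w α ⊗ₜ[R] (monomial α (1:R))
              = ∑ α ∈ sa ∪ sb, (if α ∈ sa then w α else 0) ⊗ₜ[R] (monomial α (1:R)) := by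
          intro sa sb w
          rw [← Finset.sum_subset Finset.subset_union_left
            (fun α _ hα => by rw [if_neg hα, TensorProduct.zero_tmul])]
          exact Finset.sum_congr rfl fun α hα => by rw [if_pos hα]
        rw [key s1 s2 u1, key s2 s1 u2, Finset.union_comm s2 s1]
        rw [← Finset.sum_add_distrib]
        exact Finset.sum_congr rfl fun α _ => by rw [← TensorProduct.add_tmul]
    have hker : ∀ t, φ t = 0 → t = 0 := by
      intro t ht
      obtain ⟨s, u, rfl⟩ := hrep t
      rw [map_sum] at ht
      simp only [hphi] at ht
      have hall := aux_indepn D hleib Finset.univ s (fun α _ => Finset.subset_univ _)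
        (fun α => (u α : M)) (fun α i => (u α).2 i) ht
      refine Finset.sum_eq_zero fun α hα => ?_
      rw [(Subtype.ext (hall α hα) : u α = 0), TensorProduct.zero_tmul]
    intro t1 t2 h12
    have : φ (t1 - t2) = 0 := by rw [map_sub, h12, sub_self]
    exact sub_eq_zero.mp (hker _ this)
  · -- surjectivity
    have hsmulrange : ∀ (f : MvPolynomial (Fin n) R) (t : FS ⊗[R] MvPolynomial (Fin n) R),
        ∃ t', φ t' = f • φ t := by
      intro f t
      induction t using TensorProduct.induction_on with
      | zero => exact ⟨0, by simp⟩
      | tmul m g => exact ⟨m ⊗ₜ[R] (f * g), by rw [hphi, hphi, mul_smul]⟩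
      | add x y ihx ihy =>
        obtain ⟨tx, htx⟩ := ihx
        obtain ⟨ty, hty⟩ := ihy
        exact ⟨tx + ty, by rw [map_add, map_add, htx, hty, smul_add]⟩
    have hspan : ∀ m : M,
        m ∈ Submodule.span (MvPolynomial (Fin n) R) ((FS : Submodule R M) : Set M) := by
      have key : ∀ d : ℕ, ∀ m : M, (∀ j : Fin n, (j:ℕ) < n - d → D j m = 0) →
          m ∈ Submodule.span (MvPolynomial (Fin n) R) ((FS : Submodule R M) : Set M) := by
        intro d
        induction d with
        | zero =>
          intro m hm
          exact Submodule.subset_span (show ∀ i, D i m = 0 from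
            fun i => hm i (by simp only [Nat.sub_zero]; exact i.isLt))
        | succ d ih =>
          intro m hm
          by_cases hd : n ≤ d
          · exact ih m (fun j hj => absurd hj (by omega))
          · push_neg at hd
            set i : Fin n := ⟨n - d - 1, by omega⟩ with hi
            obtain ⟨K, hK⟩ := hnilp m i
            rw [← Ppart_recon D hleib i K m hK]
            refine Submodule.sum_mem _ fun k _ => Submodule.smul_mem _ _ (ih _ ?_)
            intro j hj
            by_cases hji : j = i
            · subst hji
              apply Ppart_flat_self D hleib
              rw [← Function.iterate_add_apply, add_comm, Function.iterate_add_apply, hK,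
                aux_iterate_zero]
            · apply Ppart_flat_other D hcomm hleib i j hji
              have hji' : (j : ℕ) ≠ n - d - 1 := by
                intro hc
                exact hji (Fin.ext (by rw [hc, hi]))
              rw [aux_iter_comm D hcomm i j, hm j (by omega), aux_iterate_zero]
      intro m0
      exact key n m0 (fun j hj => absurd hj (by omega))
    intro m
    have hm := hspan m
    refine Submodule.span_induction (p := fun x _ => ∃ t, φ t = x) ?_ ?_ ?_ ?_ hm
    · intro x hx
      exact ⟨(⟨x, hx⟩ : FS) ⊗ₜ[R] (1 : MvPolynomial (Fin n) R), by rw [hphi, one_smul]⟩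
    · exact ⟨0, map_zero _⟩
    · rintro x y _ _ ⟨tx, htx⟩ ⟨ty, hty⟩
      exact ⟨tx + ty, by rw [map_add, htx, hty]⟩
    · rintro f x _ ⟨t, ht⟩
      obtain ⟨t', ht'⟩ := hsmulrange f t
      exact ⟨t', by rw [ht', ht]⟩
end

section
/- Let A be a commutative ring, t ∈ A a nonzero-divisor, and M an A-module. Suppose for all integers α, β > 0 there are exact sequences 0 → M/tᵃM → M/t^{α+β}M → M/tᵝM → 0 where the first map is multiplication by tᵝ. Let M̂ = lim_α M/tᵃM be the t-adic completion. Then multiplication by tᵝ is injective on M̂ and M̂/tᵝM̂ ≅ M/tᵝM for all β > 0. -/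
/-!
Write elements of the completion as `t`-adic Cauchy sequences `(f n)`. If `tᵝ • (f n)` is zero
in the completion, then `tᵝ • f (n + β) ∈ t^{n+β} M`, so `f (n + β) ∈ tⁿ M` and the element
vanishes. If it dies in `M/tᵝM`, every `f (n + β)` lies in `tᵝ M`, and exactness gives
`f (n + β) ≡ tᵝ • g n` modulo `t^{n+β} M`; cancelling `tᵝ` once more shows that `(g n)` is
again Cauchy, and its limit `y` satisfies `tᵝ • y = (f n)`.
-/

namespace AdicCompletion

variable {A : Type*} [CommRing A] {I : Ideal A} {M : Type*} [AddCommGroup M] [Module A M]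
  {s : A} {k : ℕ}

theorem smul_injective_of_smul_mem_pow_add
    (hinj : ∀ n (x : M), s • x ∈ (I ^ (n + k) • ⊤ : Submodule A M) →
      x ∈ (I ^ n • ⊤ : Submodule A M)) :
    Function.Injective (fun x : AdicCompletion I M => s • x) := by
  suffices h : ∀ z : AdicCompletion I M, s • z = 0 → z = 0 from
    fun x y hxy => sub_eq_zero.mp (h _ (by simpa only [smul_sub, sub_eq_zero] using hxy))
  intro z hz
  induction z using induction_on with
  | h f =>
    ext n
    have hfk : s • f (n + k) ∈ (I ^ (n + k) • ⊤ : Submodule A M) := by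
      have := congr_arg (·.val (n + k)) hz
      simp only [val_smul_apply, mk_apply_coe, Submodule.mkQ_apply, val_zero_apply] at this
      rwa [← Submodule.Quotient.mk_smul, Submodule.Quotient.mk_eq_zero] at this
    simpa [← AdicCauchySequence.mk_eq_mk (Nat.le_add_right n k), Submodule.Quotient.mk_eq_zero]
      using hinj n _ hfk

theorem isAdicCauchy_of_smul_sModEq
    (hinj : ∀ n (x : M), s • x ∈ (I ^ (n + k) • ⊤ : Submodule A M) →
      x ∈ (I ^ n • ⊤ : Submodule A M))
    {f g : ℕ → M} (hf : IsAdicCauchy I M f)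
    (hg : ∀ n, s • g n ≡ f (n + k) [SMOD (I ^ (n + k) • ⊤ : Submodule A M)]) :
    IsAdicCauchy I M g := by
  intro m n hmn
  have hmono : (I ^ (n + k) • ⊤ : Submodule A M) ≤ I ^ (m + k) • ⊤ :=
    Submodule.smul_mono_left (Ideal.pow_le_pow_right (by omega))
  have : s • g m ≡ s • g n [SMOD (I ^ (m + k) • ⊤ : Submodule A M)] :=
    (hg m).trans ((hf (by omega)).trans ((hg n).mono hmono).symm)
  rw [SModEq.sub_mem, ← smul_sub] at this
  exact SModEq.sub_mem.mpr (hinj m _ this)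

theorem smul_mk_eq_mk {f : AdicCauchySequence I M} {g : AdicCauchySequence I M}
    (hg : ∀ n, s • g n ≡ f (n + k) [SMOD (I ^ (n + k) • ⊤ : Submodule A M)]) :
    s • mk I M g = mk I M f := by
  ext n
  have hmono : (I ^ (n + k) • ⊤ : Submodule A M) ≤ I ^ n • ⊤ :=
    Submodule.smul_mono_left (Ideal.pow_le_pow_right (by omega))
  have : s • g n ≡ f n [SMOD (I ^ n • ⊤ : Submodule A M)] :=
    ((hg n).mono hmono).trans (f.property (Nat.le_add_right n k)).symm
  simpa [val_smul_apply, ← Submodule.Quotient.mk_smul] using (SModEq.def).mp this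

theorem exists_smul_eq_of_eval_eq_zero
    (hinj : ∀ n (x : M), s • x ∈ (I ^ (n + k) • ⊤ : Submodule A M) →
      x ∈ (I ^ n • ⊤ : Submodule A M))
    (hexact : ∀ n (x : M), x ∈ (I ^ k • ⊤ : Submodule A M) →
      ∃ y : M, x - s • y ∈ (I ^ (n + k) • ⊤ : Submodule A M))
    {x : AdicCompletion I M} (hx : eval I M k x = 0) : ∃ y, s • y = x := by
  induction x using induction_on with
  | h f =>
  have hf : ∀ n, f (n + k) ∈ (I ^ k • ⊤ : Submodule A M) := fun n => by
    rw [← Submodule.Quotient.mk_eq_zero, AdicCauchySequence.mk_eq_mk (Nat.le_add_left k n)]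
    simpa using hx
  choose g hg using fun n => hexact n _ (hf n)
  have hg' : ∀ n, s • g n ≡ f (n + k) [SMOD (I ^ (n + k) • ⊤ : Submodule A M)] :=
    fun n => (SModEq.sub_mem.mpr (hg n)).symm
  exact ⟨mk I M ⟨g, isAdicCauchy_of_smul_sModEq hinj f.property hg'⟩, smul_mk_eq_mk hg'⟩

end AdicCompletion

theorem adicCompletion_smul_injective_and_quotients_general
    {A : Type*} [CommRing A] (t : A)
    (M : Type*) [AddCommGroup M] [Module A M]
    -- injectivity of `tᵝ : M/tᵃM → M/t^{α+β}M`: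
    (hinj : ∀ α > 0, ∀ β > 0, ∀ x : M,
      t ^ β • x ∈ ((Ideal.span {t}) ^ (α + β) • ⊤ : Submodule A M) →
        x ∈ ((Ideal.span {t}) ^ α • ⊤ : Submodule A M))
    -- exactness in the middle: anything killed in `M/tᵝM` is `tᵝ • y` mod `t^{α+β}`:
    (hexact : ∀ α > 0, ∀ β > 0, ∀ x : M,
      x ∈ ((Ideal.span {t}) ^ β • ⊤ : Submodule A M) →
        ∃ y : M, x - t ^ β • y ∈ ((Ideal.span {t}) ^ (α + β) • ⊤ : Submodule A M)) :
    ∀ β > 0,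
      Function.Injective
        (fun x : AdicCompletion (Ideal.span {t}) M => t ^ β • x) ∧
      Function.Surjective (AdicCompletion.eval (Ideal.span {t}) M β) ∧
      LinearMap.ker (AdicCompletion.eval (Ideal.span {t}) M β)
        = Ideal.span {t ^ β} • (⊤ : Submodule A (AdicCompletion (Ideal.span {t}) M)) := by
  intro β hβ
  have hinj' : ∀ n (x : M), t ^ β • x ∈ (Ideal.span {t} ^ (n + β) • ⊤ : Submodule A M) →
      x ∈ (Ideal.span {t} ^ n • ⊤ : Submodule A M) := fun n x hx =>
    n.eq_zero_or_pos.elim (fun h => by simp [h]) (fun hn => hinj n hn β hβ x hx)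
  have hexact' : ∀ n (x : M), x ∈ (Ideal.span {t} ^ β • ⊤ : Submodule A M) →
      ∃ y : M, x - t ^ β • y ∈ (Ideal.span {t} ^ (n + β) • ⊤ : Submodule A M) := fun n x hx =>
    n.eq_zero_or_pos.elim (fun h => ⟨0, by simpa [h] using hx⟩) (fun hn => hexact n hn β hβ x hx)
  refine ⟨AdicCompletion.smul_injective_of_smul_mem_pow_add hinj',
    AdicCompletion.eval_surjective _ M β, le_antisymm (fun x hx => ?_) ?_⟩
  · obtain ⟨y, rfl⟩ := AdicCompletion.exists_smul_eq_of_eval_eq_zero hinj' hexact' hx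
    exact Submodule.smul_mem_smul (Ideal.mem_span_singleton_self _) Submodule.mem_top
  · rw [← Ideal.span_singleton_pow]
    exact AdicCompletion.pow_smul_top_le_ker_eval _ β

/-- if `t` is a nonzero-divisor on `A` and for all `α, β > 0` the sequences
`0 → M/tᵃM → M/t^{α+β}M → M/tᵝM → 0` (first map multiplication by `tᵝ`) are exact,
then multiplication by `tᵝ` is injective on the `t`-adic completion `M̂` and
`M̂/tᵝM̂ ≅ M/tᵝM` for all `β > 0`. -/
theorem adicCompletion_smul_injective_and_quotients
    {A : Type*} [CommRing A] (t : A) (ht : t ∈ nonZeroDivisors A)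
    (M : Type*) [AddCommGroup M] [Module A M]
    -- injectivity of `tᵝ : M/tᵃM → M/t^{α+β}M`:
    (hinj : ∀ α > 0, ∀ β > 0, ∀ x : M,
      t ^ β • x ∈ ((Ideal.span {t}) ^ (α + β) • ⊤ : Submodule A M) →
        x ∈ ((Ideal.span {t}) ^ α • ⊤ : Submodule A M))
    -- exactness in the middle: anything killed in `M/tᵝM` is `tᵝ • y` mod `t^{α+β}`:
    (hexact : ∀ α > 0, ∀ β > 0, ∀ x : M,
      x ∈ ((Ideal.span {t}) ^ β • ⊤ : Submodule A M) →
        ∃ y : M, x - t ^ β • y ∈ ((Ideal.span {t}) ^ (α + β) • ⊤ : Submodule A M)) :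
    ∀ β > 0,
      Function.Injective
        (fun x : AdicCompletion (Ideal.span {t}) M => t ^ β • x) ∧
      Function.Surjective (AdicCompletion.eval (Ideal.span {t}) M β) ∧
      LinearMap.ker (AdicCompletion.eval (Ideal.span {t}) M β)
        = Ideal.span {t ^ β} • (⊤ : Submodule A (AdicCompletion (Ideal.span {t}) M)) :=
  adicCompletion_smul_injective_and_quotients_general t M hinj hexact
end

section
/- Let A be a ring, t ∈ A, and (M_α)_{α≥1} an inverse system of A-modules with surjective transition maps M_{α+1} → M_α, such that for all α, β > 0 there are exact sequences 0 → M_α →^{tᵝ} M_{α+β} → M_β → 0 compatible with transitions. Suppose M₁ is a free A/t-module with basis the images of elements e₁,…,e_r ∈ lim_α M_α. Then for every α, the map (A/tᵃ)^r → M_α sending the standard basis to the images of e₁,…,e_r is an isomorphism. -/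
/-- an inverse system `(M_α)` of `A`-modules with surjective transition
maps and exact sequences `0 → M_α →^{tᵝ} M_{α+β} → M_β → 0`, together with elements
`e₁, …, e_r` of the inverse limit whose images form a basis of the free `A/t`-module
`M₁`, has each `M_α` free over `A/tᵃ` on the images of the `eᵢ`. -/
theorem inverse_system_free_on_lifted_basis
    {A : Type*} [CommRing A] (t : A) (r : ℕ)
    (M : ℕ → Type*) [∀ α, AddCommGroup (M α)] [∀ α, Module A (M α)]
    -- transition maps, surjective
    (π : ∀ α, M (α + 1) →ₗ[A] M α) (hπ : ∀ α, Function.Surjective (π α))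
    -- the maps "multiplication by tᵝ" `M_α → M_{α+β}` and the projections `M_{α+β} → M_β`
    (ι : ∀ α β, M α →ₗ[A] M (α + β)) (ρ : ∀ α β, M (α + β) →ₗ[A] M β)
    (hιinj : ∀ α > 0, ∀ β > 0, Function.Injective (ι α β))
    (hρsurj : ∀ α > 0, ∀ β > 0, Function.Surjective (ρ α β))
    (hexact : ∀ α > 0, ∀ β > 0, Function.Exact (ι α β) (ρ α β))
    -- compatible elements `e i` of the inverse limit
    (e : Fin r → ∀ α, M α)
    (he : ∀ i α, π α (e i (α + 1)) = e i α)
    -- `ι` is multiplication by `tᵝ` and `ρ` is reduction, on the elements `e i`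
    (hιe : ∀ α β i, ι α β (e i α) = t ^ β • e i (α + β))
    (hρe : ∀ α β i, ρ α β (e i (α + β)) = e i β)
    -- `M₁` is free over `A/t` with basis the images of the `e i`
    (hbase_surj : Function.Surjective
      (fun c : Fin r → A => ∑ i, c i • e i 1))
    (hbase_ker : ∀ c : Fin r → A, (∑ i, c i • e i 1) = 0 → ∀ i, c i ∈ Ideal.span {t}) :
    ∀ α > 0,
      Function.Surjective (fun c : Fin r → A => ∑ i, c i • e i α) ∧
      (∀ c : Fin r → A, (∑ i, c i • e i α) = 0 ↔ ∀ i, c i ∈ Ideal.span {t ^ α}) := by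
  -- `t^α` kills `e i α`
  have hkill : ∀ α, 0 < α → ∀ i, (t ^ α : A) • e i α = 0 := by
    intro α hα i
    have h1 : ρ α α (ι α α (e i α)) = 0 :=
      (hexact α hα α hα _).mpr ⟨e i α, rfl⟩
    rwa [hιe, map_smul, hρe] at h1
  -- coefficients in `span {t^α}` give zero sums
  have hzero : ∀ α, 0 < α → ∀ c : Fin r → A,
      (∀ i, c i ∈ Ideal.span {t ^ α}) → ∑ i, c i • e i α = 0 := by
    intro α hα c hc
    have hd : ∀ i, ∃ d, c i = t ^ α * d := fun i =>
      Ideal.mem_span_singleton.mp (hc i)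
    choose d hd using hd
    calc ∑ i, c i • e i α = ∑ i, d i • ((t ^ α : A) • e i α) := by
          refine Finset.sum_congr rfl fun i _ => ?_
          rw [hd i, smul_smul, mul_comm]
      _ = 0 := by simp [hkill α hα]
  suffices H : ∀ α, 0 < α →
      Function.Surjective (fun c : Fin r → A => ∑ i, c i • e i α) ∧
      (∀ c : Fin r → A, (∑ i, c i • e i α) = 0 ↔ ∀ i, c i ∈ Ideal.span {t ^ α}) by
    exact H
  intro α
  induction α with
  | zero => intro h; omega
  | succ α ih =>
    intro _
    rcases Nat.eq_zero_or_pos α with h0 | hαpos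
    · subst h0
      refine ⟨hbase_surj, fun c => ⟨fun hc i => by simpa using hbase_ker c hc i,
        fun hc => hzero 1 one_pos c hc⟩⟩
    obtain ⟨ihs, ihk⟩ := ih hαpos
    -- `ι α 1` applied to a combination of `e i α` via `t`
    have hiota : ∀ d : Fin r → A,
        ι α 1 (∑ i, d i • e i α) = ∑ i, (t * d i) • e i (α + 1) := by
      intro d
      rw [map_sum]
      refine Finset.sum_congr rfl fun i _ => ?_
      rw [map_smul, hιe, pow_one, smul_smul, mul_comm]
    constructor
    · intro m
      obtain ⟨c, hc⟩ := hbase_surj (ρ α 1 m)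
      simp only at hc
      have hker : ρ α 1 (m - ∑ i, c i • e i (α + 1)) = 0 := by
        rw [map_sub, map_sum, sub_eq_zero]
        rw [← hc]
        refine (Finset.sum_congr rfl fun i _ => ?_).symm
        rw [map_smul, hρe]
      obtain ⟨m', hm'⟩ := (hexact α hαpos 1 one_pos _).mp hker
      obtain ⟨d, hd⟩ := ihs m'
      simp only at hd
      refine ⟨fun i => c i + t * d i, ?_⟩
      simp only [add_smul, Finset.sum_add_distrib]
      rw [← hiota d, hd, hm']
      abel
    · intro c
      refine ⟨fun hc => ?_, hzero (α + 1) (Nat.succ_pos α) c⟩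
      have h1 : ∑ i, c i • e i 1 = 0 := by
        have := congrArg (ρ α 1) hc
        rw [map_sum, map_zero] at this
        rw [← this]
        refine Finset.sum_congr rfl fun i _ => ?_
        rw [map_smul, hρe]
      have hd : ∀ i, ∃ d, c i = t * d := fun i =>
        Ideal.mem_span_singleton.mp (hbase_ker c h1 i)
      choose d hd using hd
      have h2 : ι α 1 (∑ i, d i • e i α) = 0 := by
        rw [hiota d, ← hc]
        exact Finset.sum_congr rfl fun i _ => by rw [hd i]
      have h3 : ∑ i, d i • e i α = 0 :=
        hιinj α hαpos 1 one_pos (by rw [h2, map_zero])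
      intro i
      obtain ⟨u, hu⟩ := Ideal.mem_span_singleton.mp ((ihk d).mp h3 i)
      exact Ideal.mem_span_singleton.mpr ⟨u, by rw [hd i, hu, pow_succ]; ring⟩
end

section
/- Let K be a field of characteristic 0 containing all p-power roots of unity, let M be a K-vector space with commuting linear automorphisms γ₁,…,γ_d, and suppose each γᵢ admits compatible p-power roots γᵢ^{1/pᴺ} acting on a module M_N ⊇ M. If M_N decomposes as a direct sum of generalized eigenspaces M_N^{(k₁,…,k_d)} on which γᵢ^{1/pᴺ} − ζ_{pᴺ}^{kᵢ} acts nilpotently, and each eigenspace M_N^{(k₁,…,k_d)} equals u^{(k₁,…,k_d)} · M_N^{(0,…,0)} for some unit u, then the natural map M_N^{(0,…,0)} ⊗_{A₀} A_N → M_N is an isomorphism, where A_N is the group algebra of the characters appearing. -/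
/-!
The map `φ : m ⊗ a ↦ a • m` is onto because its image contains every translate `u_k • M₀`.
For injectivity, the decomposition `M = ⊕_k u_k • M₀` lets one define `ψ : M → M₀ ⊗ A` piecewise
by `x ↦ u_k⁻¹ x ⊗ u_k` on `u_k • M₀`. Since `A = Σ_k u_k • A₀`, the tensors `m ⊗ u_k a₀` span
`M₀ ⊗ A`, and on them `ψ (φ (m ⊗ u_k a₀)) = ψ (u_k • a₀ m) = a₀ m ⊗ u_k = m ⊗ u_k a₀`,
so `ψ` is a left inverse of `φ`.
-/

open scoped TensorProduct DirectSum Pointwise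

theorem Submodule.mem_pointwise_smul_iff_inv_smul_mem {G R M : Type*} [Group G] [Semiring R]
    [AddCommMonoid M] [Module R M] [DistribMulAction G M] [SMulCommClass G R M]
    {g : G} {S : Submodule R M} {x : M} : x ∈ g • S ↔ g⁻¹ • x ∈ S := by
  change x ∈ g • (S : Set M) ↔ _
  exact Set.mem_smul_set_iff_inv_smul_mem

section TensorSMul

variable {A₀ A M : Type*} [CommRing A₀] [CommRing A] [Algebra A₀ A]
  [AddCommGroup M] [Module A M] [Module A₀ M] [IsScalarTower A₀ A M]
  (M₀ : Submodule A₀ M)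

variable (A) in
def tensorSMul : M₀ ⊗[A₀] A →ₗ[A₀] M :=
  TensorProduct.lift
    (LinearMap.mk₂ A₀ (fun (m : M₀) (a : A) => a • (m : M))
      (fun m m' a => by simp [smul_add])
      (fun r m a => (smul_comm r a (m : M)).symm)
      (fun m a a' => by simp [add_smul])
      (fun r m a => smul_assoc r a (m : M)))

@[simp]
theorem tensorSMul_tmul (m : M₀) (a : A) : tensorSMul A M₀ (m ⊗ₜ a) = a • (m : M) := rfl

theorem smul_le_range_tensorSMul (a : A) : a • M₀ ≤ LinearMap.range (tensorSMul A M₀) := by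
  rintro _ ⟨m, hm, rfl⟩
  exact ⟨⟨m, hm⟩ ⊗ₜ a, rfl⟩

theorem tensorSMul_surjective {ι : Type*} (u : ι → A) (hM : ⨆ i, u i • M₀ = ⊤) :
    Function.Surjective (tensorSMul A M₀) :=
  LinearMap.range_eq_top.mp <| top_unique <|
    hM ▸ iSup_le fun i => smul_le_range_tensorSMul M₀ (u i)

def tensorSMulInvOn (v : Aˣ) : ↥(v • M₀) →ₗ[A₀] M₀ ⊗[A₀] A :=
  (TensorProduct.mk A₀ M₀ A).flip v ∘ₗ
    (DistribSMul.toLinearMap A₀ M v⁻¹).restrict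
      fun _ hx => Submodule.mem_pointwise_smul_iff_inv_smul_mem.mp hx

theorem tensorSMulInvOn_apply (v : Aˣ) (x : ↥(v • M₀)) :
    tensorSMulInvOn M₀ v x =
      ⟨v⁻¹ • (x : M), Submodule.mem_pointwise_smul_iff_inv_smul_mem.mp x.2⟩ ⊗ₜ (v : A) :=
  rfl

variable {ι : Type*} [DecidableEq ι] {u : ι → Aˣ}

noncomputable def tensorSMulInv (hM : DirectSum.IsInternal fun i => u i • M₀) :
    M →ₗ[A₀] M₀ ⊗[A₀] A :=
  DirectSum.toModule A₀ ι _ (fun i => tensorSMulInvOn M₀ (u i)) ∘ₗ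
    (LinearEquiv.ofBijective (DirectSum.coeLinearMap fun i => u i • M₀) hM).symm.toLinearMap

theorem tensorSMulInv_smul (hM : DirectSum.IsInternal fun i => u i • M₀) (i : ι) (m : M₀) :
    tensorSMulInv M₀ hM (u i • (m : M)) = m ⊗ₜ (u i : A) := by
  have hmem : u i • (m : M) ∈ u i • M₀ := Submodule.smul_mem_pointwise_smul _ _ _ m.2
  have hcomponent : (LinearEquiv.ofBijective (DirectSum.coeLinearMap fun i => u i • M₀) hM).symm
      (u i • (m : M)) = DirectSum.lof A₀ ι _ i ⟨_, hmem⟩ := by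
    rw [LinearEquiv.symm_apply_eq]
    exact (DirectSum.coeLinearMap_of (fun i => u i • M₀) i ⟨_, hmem⟩).symm
  simp [tensorSMulInv, hcomponent, tensorSMulInvOn_apply]

theorem tensorSMulInv_comp_tensorSMul (hM : DirectSum.IsInternal fun i => u i • M₀)
    (hA : ⨆ i, u i • (1 : Submodule A₀ A) = ⊤) :
    tensorSMulInv M₀ hM ∘ₗ tensorSMul A M₀ = LinearMap.id := by
  refine TensorProduct.ext' fun m a => ?_
  have hgenerators : ⊤ ≤ LinearMap.eqLocus
      (tensorSMulInv M₀ hM ∘ₗ tensorSMul A M₀ ∘ₗ TensorProduct.mk A₀ M₀ A m)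
      (TensorProduct.mk A₀ M₀ A m) := by
    rw [← hA]
    refine iSup_le fun i => ?_
    rintro _ ⟨_, ⟨a₀, rfl⟩, rfl⟩
    change tensorSMulInv M₀ hM (((u i : A) * a₀ • (1 : A)) • (m : M)) =
      m ⊗ₜ ((u i : A) * a₀ • (1 : A))
    calc _ = tensorSMulInv M₀ hM (u i • ((a₀ • m : M₀) : M)) := by
          rw [mul_smul, smul_one_smul]; rfl
      _ = (a₀ • m) ⊗ₜ (u i : A) := tensorSMulInv_smul M₀ hM i _
      _ = _ := by rw [TensorProduct.smul_tmul, mul_smul_one]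
  exact hgenerators trivial

theorem tensorSMul_bijective (hM : DirectSum.IsInternal fun i => u i • M₀)
    (hA : ⨆ i, u i • (1 : Submodule A₀ A) = ⊤) : Function.Bijective (tensorSMul A M₀) :=
  ⟨Function.LeftInverse.injective (g := tensorSMulInv M₀ hM)
      (LinearMap.congr_fun (tensorSMulInv_comp_tensorSMul M₀ hM hA)),
    tensorSMul_surjective M₀ (fun i => (u i : A)) hM.submodule_iSup_eq_top⟩

end TensorSMul

/-- if a module `M` over `A` decomposes, as an `A₀`-module, as the direct
sum of the translates `u_k · M₀` of its unipotent part `M₀` by units `u_k` (indexed by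
the characters `k = (k₁,…,k_d) ∈ (ℤ/pᴺ)^d`, with `u_0 = 1`), and `A` likewise
decomposes as `⊕_k u_k · A₀`, then the natural map `M₀ ⊗_{A₀} A → M`, `m ⊗ a ↦ a • m`,
is an isomorphism. -/
theorem eigenspace_decomposition_tensor_iso
    (p N d : ℕ)
    {A₀ : Type*} [CommRing A₀]
    {A : Type*} [CommRing A] [Algebra A₀ A]
    {M : Type*} [AddCommGroup M] [Module A M] [Module A₀ M] [IsScalarTower A₀ A M]
    (u : (Fin d → ZMod (p ^ N)) → Aˣ)
    (M₀ : Submodule A₀ M)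
    -- `M = ⊕_k u_k · M₀` as `A₀`-modules
    (hM : DirectSum.IsInternal (fun k : Fin d → ZMod (p ^ N) =>
      Submodule.map ((LinearMap.lsmul A M ((u k : A))).restrictScalars A₀) M₀))
    -- `A = ⊕_k u_k · A₀` as `A₀`-modules
    (hA : DirectSum.IsInternal (fun k : Fin d → ZMod (p ^ N) =>
      Submodule.map ((LinearMap.lsmul A A ((u k : A))).restrictScalars A₀)
        (1 : Submodule A₀ A))) :
    Function.Bijective
      (TensorProduct.lift
        (LinearMap.mk₂ A₀ (fun (m : M₀) (a : A) => a • (m : M))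
          (fun m m' a => by simp [smul_add])
          (fun r m a => (smul_comm r a (m : M)).symm)
          (fun m a a' => by simp [add_smul])
          (fun r m a => smul_assoc r a (m : M)))) :=
  tensorSMul_bijective M₀ hM hA.submodule_iSup_eq_top
end

section
/- Let R be a ℚ-algebra and B = R⟨V₁,…,V_d⟩ a polynomial ring (or suitable completion) over R with commuting derivations ∂/∂Vᵢ, and let M be a finite projective B-module with integrable nilpotent connection ∇ extending d. Then the de Rham complex DR(M, ∇) is quasi-isomorphic to the flat sections M^{∇=0} placed in degree 0; in particular H⁰(DR(M,∇)) = M^{∇=0} and H^i(DR(M,∇)) = 0 for i > 0. -/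
/-!
Over a `ℚ`-algebra each `D a` has the right inverse
`I a = ∑ₙ (-1)ⁿ (V_a^{n+1}/(n+1)!) • (D a)ⁿ`, a finite sum on each element by local nilpotence,
and `I a` commutes with `D b` for `b ≠ a` because `∂/∂V_b` kills its coefficients.
With such right inverses the Koszul complex of the commuting `D a` is exact in positive
degrees: for a cocycle `f`, the homotopy `K_a` (remove `dV_a`, then apply `I a`) makes
`f - d (K_a f)` a cocycle without `dV_a` whose coefficients are killed by `D a`, so the
variables can be eliminated one at a time until nothing is left.
-/

open MvPolynomial

/-- The Koszul-type de Rham differential of a connection `D = (D₁,…,D_d)` on a module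
`M`, acting on alternating forms indexed by `k`-element subsets of `{1,…,d}`. -/
noncomputable def connDeRhamD {M : Type*} [AddCommGroup M] {d k : ℕ}
    (D : Fin d → M →+ M)
    (ω : {s : Finset (Fin d) // s.card = k} → M) :
    {s : Finset (Fin d) // s.card = k + 1} → M :=
  fun s => ∑ i ∈ s.1.attach,
    ((-1 : ℤ) ^ ((s.1.filter (fun j => j < i.1)).card)) •
      D i.1 (ω ⟨s.1.erase i.1, by simp [Finset.card_erase_of_mem i.2, s.2]⟩)

lemma iterate_eq_zero_of_le {A : Type*} [AddMonoid A] {D : A →+ A} {m : A} {N N' : ℕ}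
    (hN : D^[N] m = 0) (h : N ≤ N') : D^[N'] m = 0 := by
  obtain ⟨c, rfl⟩ := Nat.exists_eq_add_of_le h
  rw [add_comm, Function.iterate_add_apply, hN, iterate_map_zero]

section Antiderivative

open scoped Nat

variable {σ R : Type*} [CommRing R] [Algebra ℚ R]

noncomputable def dividedPowerX (a : σ) (n : ℕ) : MvPolynomial σ R :=
  C (algebraMap ℚ R (n ! : ℚ)⁻¹) * X a ^ n

@[simp]
lemma dividedPowerX_zero (a : σ) : dividedPowerX (R := R) a 0 = 1 := by
  simp [dividedPowerX]

lemma pderiv_dividedPowerX_succ (a : σ) (n : ℕ) :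
    pderiv a (dividedPowerX (R := R) a (n + 1)) = dividedPowerX a n := by
  have hq : ((n + 1)! : ℚ)⁻¹ * (n + 1 : ℕ) = (n ! : ℚ)⁻¹ := by
    rw [Nat.factorial_succ]
    push_cast
    field_simp
  rw [dividedPowerX, dividedPowerX, pderiv_C_mul, pderiv_pow, pderiv_X_self, mul_one,
    Nat.add_sub_cancel, ← mul_assoc, ← hq, map_mul, map_mul, map_natCast, map_natCast]

lemma pderiv_dividedPowerX_of_ne {a b : σ} (h : b ≠ a) (n : ℕ) :
    pderiv b (dividedPowerX (R := R) a n) = 0 := by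
  rw [dividedPowerX, pderiv_C_mul, pderiv_pow, pderiv_X_of_ne h.symm, mul_zero, mul_zero]

variable {M : Type*} [AddCommGroup M] [Module (MvPolynomial σ R) M]

variable (R) in
noncomputable def antiderivSum (D : M →+ M) (a : σ) (N : ℕ) (m : M) : M :=
  ∑ n ∈ Finset.range N, (-1 : ℤ) ^ n • dividedPowerX (R := R) a (n + 1) • D^[n] m

lemma antiderivSum_add (D : M →+ M) (a : σ) (N : ℕ) (x y : M) :
    antiderivSum R D a N (x + y) = antiderivSum R D a N x + antiderivSum R D a N y := by
  simp only [antiderivSum, iterate_map_add, smul_add, Finset.sum_add_distrib]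

lemma antiderivSum_eq_of_le {D : M →+ M} {m : M} {N N' : ℕ} (hN : D^[N] m = 0)
    (h : N ≤ N') (a : σ) : antiderivSum R D a N' m = antiderivSum R D a N m := by
  rw [antiderivSum, antiderivSum, ← Finset.sum_range_add_sum_Ico _ h,
    Finset.sum_eq_zero (s := Finset.Ico N N'), add_zero]
  intro n hn
  rw [iterate_eq_zero_of_le hN (Finset.mem_Ico.mp hn).1, smul_zero, smul_zero]

lemma antiderivSum_eq_of_iterate_eq_zero {D : M →+ M} {m : M} {N N' : ℕ}
    (hN : D^[N] m = 0) (hN' : D^[N'] m = 0) (a : σ) :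
    antiderivSum R D a N m = antiderivSum R D a N' m := by
  rcases le_total N N' with h | h
  · exact (antiderivSum_eq_of_le hN h a).symm
  · exact antiderivSum_eq_of_le hN' h a

variable (R) in
noncomputable def antideriv (D : M →+ M) (hD : ∀ m, ∃ n, D^[n] m = 0) (a : σ) : M →+ M where
  toFun m := antiderivSum R D a (hD m).choose m
  map_zero' := by simp [antiderivSum]
  map_add' x y := by
    set N := max (hD x).choose (hD y).choose
    have hx : D^[N] x = 0 := iterate_eq_zero_of_le (hD x).choose_spec (le_max_left _ _)
    have hy : D^[N] y = 0 := iterate_eq_zero_of_le (hD y).choose_spec (le_max_right _ _)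
    have hxy : D^[N] (x + y) = 0 := by rw [iterate_map_add, hx, hy, add_zero]
    rw [antiderivSum_eq_of_iterate_eq_zero (hD _).choose_spec hxy,
      antiderivSum_eq_of_iterate_eq_zero (hD _).choose_spec hx,
      antiderivSum_eq_of_iterate_eq_zero (hD _).choose_spec hy, antiderivSum_add]

lemma antideriv_apply_of_iterate_eq_zero {D : M →+ M} (hD : ∀ m, ∃ n, D^[n] m = 0) (a : σ)
    {m : M} {N : ℕ} (hN : D^[N] m = 0) : antideriv R D hD a m = antiderivSum R D a N m :=
  antiderivSum_eq_of_iterate_eq_zero (hD m).choose_spec hN a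

lemma apply_antideriv {D : M →+ M} (hD : ∀ m, ∃ n, D^[n] m = 0) {a : σ}
    (hleib : ∀ (f : MvPolynomial σ R) (m : M), D (f • m) = pderiv a f • m + f • D m) (m : M) :
    D (antideriv R D hD a m) = m := by
  obtain ⟨N, hN⟩ := hD m
  -- `D (X^{n+1}/(n+1)! • Dⁿ m) = Xⁿ/n! • Dⁿ m + X^{n+1}/(n+1)! • Dⁿ⁺¹ m`: the sum telescopes
  set u : ℕ → M := fun n => (-1 : ℤ) ^ n • dividedPowerX (R := R) a n • D^[n] m
  have hterm : ∀ n, D ((-1 : ℤ) ^ n • dividedPowerX (R := R) a (n + 1) • D^[n] m)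
      = u n - u (n + 1) := by
    intro n
    rw [map_zsmul, hleib, pderiv_dividedPowerX_succ, ← Function.iterate_succ_apply' D n m]
    simp only [u, pow_succ, mul_neg_one, neg_smul, sub_neg_eq_add, smul_add]
  rw [antideriv_apply_of_iterate_eq_zero hD a hN, antiderivSum, map_sum,
    Finset.sum_congr rfl fun n _ => hterm n, Finset.sum_range_sub']
  simp [u, hN]

lemma antideriv_commute {D D' : M →+ M} (hD : ∀ m, ∃ n, D^[n] m = 0) {a b : σ} (hab : b ≠ a)
    (hleib : ∀ (f : MvPolynomial σ R) (m : M), D' (f • m) = pderiv b f • m + f • D' m)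
    (hcomm : ∀ m, D' (D m) = D (D' m)) (m : M) :
    D' (antideriv R D hD a m) = antideriv R D hD a (D' m) := by
  obtain ⟨N, hN⟩ := hD m
  have hiter : ∀ n, D^[n] (D' m) = D' (D^[n] m) := fun n =>
    Function.Commute.iterate_left (fun x => (hcomm x).symm) n m
  have hN' : D^[N] (D' m) = 0 := by rw [hiter, hN, map_zero]
  rw [antideriv_apply_of_iterate_eq_zero hD a hN, antideriv_apply_of_iterate_eq_zero hD a hN',
    antiderivSum, antiderivSum, map_sum]
  refine Finset.sum_congr rfl fun n _ => ?_
  rw [map_zsmul, hleib, pderiv_dividedPowerX_of_ne hab, zero_smul, zero_add, hiter]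

end Antiderivative

section Koszul

open Finset

variable {ι M : Type*} [LinearOrder ι] [AddCommGroup M]

def koszulSign (i : ι) (s : Finset ι) : ℤ := (-1) ^ #{j ∈ s | j < i}

lemma koszulSign_mul_self (i : ι) (s : Finset ι) : koszulSign i s * koszulSign i s = 1 := by
  rw [koszulSign, ← pow_add, ← two_mul, pow_mul, neg_one_sq, one_pow]

lemma koszulSign_smul_koszulSign_smul (i : ι) (s : Finset ι) (m : M) :
    koszulSign i s • koszulSign i s • m = m := by
  rw [smul_smul, koszulSign_mul_self, one_smul]

lemma koszulSign_erase_self (i : ι) (s : Finset ι) :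
    koszulSign i (s.erase i) = koszulSign i s := by
  rw [koszulSign, koszulSign, filter_erase, erase_eq_of_notMem]
  simp

lemma koszulSign_insert_self (i : ι) (s : Finset ι) :
    koszulSign i (insert i s) = koszulSign i s := by
  rw [koszulSign, koszulSign, filter_insert, if_neg (lt_irrefl i)]

lemma koszulSign_mul_koszulSign_erase {a i : ι} {s : Finset ι} (ha : a ∉ s) (hi : i ∈ s) :
    koszulSign i s * koszulSign a (s.erase i) =
      -(koszulSign a s * koszulSign i (insert a s)) := by
  have hne : i ≠ a := fun h => ha (h ▸ hi)
  rw [koszulSign, koszulSign, koszulSign, koszulSign, filter_erase, filter_insert]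
  rcases hne.lt_or_gt with h | h
  · have hmem : i ∈ ({j ∈ s | j < a} : Finset ι) := mem_filter.mpr ⟨hi, h⟩
    rw [if_neg (asymm h), ← card_erase_add_one hmem, pow_succ]
    ring
  · have hi' : i ∉ ({j ∈ s | j < a} : Finset ι) := fun hc => asymm h (mem_filter.mp hc).2
    have ha' : a ∉ ({j ∈ s | j < i} : Finset ι) := fun hc => ha (mem_filter.mp hc).1
    rw [if_pos h, erase_eq_of_notMem hi', card_insert_of_notMem ha', pow_succ]
    ring

/-- Cochains of all degrees at once: `f s` is the coefficient of `dV_s`, and `connDeRhamD` is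
the restriction of `koszulD` to cochains of degree `k`. -/
def koszulD (D : ι → M →+ M) (f : Finset ι → M) : Finset ι → M :=
  fun s => ∑ i ∈ s, koszulSign i s • D i (f (s.erase i))

lemma koszulD_add (D : ι → M →+ M) (f g : Finset ι → M) :
    koszulD D (f + g) = koszulD D f + koszulD D g := by
  ext s
  simp only [koszulD, Pi.add_apply, map_add, smul_add, sum_add_distrib]

lemma koszulD_congr_of_card {D : ι → M →+ M} {f g : Finset ι → M} {k : ℕ}
    (hfg : ∀ t : Finset ι, #t = k → f t = g t) {s : Finset ι} (hs : #s = k + 1) :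
    koszulD D f s = koszulD D g s :=
  sum_congr rfl fun i hi => by rw [hfg _ (by rw [card_erase_of_mem hi, hs, Nat.add_sub_cancel])]

lemma koszulD_apply_eq_zero_of_card (D : ι → M →+ M) {f : Finset ι → M} {k : ℕ}
    (hf : ∀ t : Finset ι, #t ≠ k → f t = 0) {s : Finset ι} (hs : #s ≠ k + 1) :
    koszulD D f s = 0 :=
  sum_eq_zero fun i hi => by
    rw [hf _ fun h => hs (by rw [← card_erase_add_one hi, h]), map_zero, smul_zero]

def koszulHomotopy (I : ι → M →+ M) (a : ι) (f : Finset ι → M) : Finset ι → M :=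
  fun t => if a ∈ t then 0 else koszulSign a t • I a (f (insert a t))

/-- For a cocycle `f` this is `f - koszulD D (koszulHomotopy I a f)`: a cocycle without `dV_a`
whose coefficients are killed by `D a`. -/
def koszulEliminate (D I : ι → M →+ M) (a : ι) (f : Finset ι → M) : Finset ι → M :=
  fun s => if a ∈ s then 0 else f s - I a (D a (f s))

variable {D I : ι → M →+ M}

lemma koszulEliminate_of_mem {a : ι} {s : Finset ι} (ha : a ∈ s) (f : Finset ι → M) :
    koszulEliminate D I a f s = 0 :=
  if_pos ha

lemma koszulEliminate_of_notMem {a : ι} {s : Finset ι} (ha : a ∉ s) (f : Finset ι → M) :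
    koszulEliminate D I a f s = f s - I a (D a (f s)) :=
  if_neg ha

lemma koszulD_koszulHomotopy_of_mem (hDI : ∀ a m, D a (I a m) = m) {a : ι} {s : Finset ι}
    (ha : a ∈ s) (f : Finset ι → M) : koszulD D (koszulHomotopy I a f) s = f s := by
  rw [koszulD, sum_eq_single_of_mem a ha]
  · rw [koszulHomotopy, if_neg (notMem_erase a s), koszulSign_erase_self, insert_erase ha,
      map_zsmul, hDI, koszulSign_smul_koszulSign_smul]
  · intro i hi hne
    rw [koszulHomotopy, if_pos (mem_erase.mpr ⟨fun h => hne h.symm, ha⟩), map_zero, smul_zero]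

lemma koszulD_koszulHomotopy_of_notMem
    (hDI_comm : ∀ a b, b ≠ a → ∀ m, D b (I a m) = I a (D b m))
    {a : ι} {s : Finset ι} (ha : a ∉ s) {f : Finset ι → M} (hf : koszulD D f (insert a s) = 0) :
    koszulD D (koszulHomotopy I a f) s = I a (D a (f s)) := by
  have hne : ∀ i ∈ s, i ≠ a := fun i hi h => ha (h ▸ hi)
  -- closedness of `f` at `insert a s` expresses `D a (f s)` through the other `D i`
  have hDa : D a (f s) = -koszulSign a s •
      ∑ i ∈ s, koszulSign i (insert a s) • D i (f (insert a (s.erase i))) := by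
    have hsum : ∑ i ∈ s, koszulSign i (insert a s) • D i (f ((insert a s).erase i)) =
        ∑ i ∈ s, koszulSign i (insert a s) • D i (f (insert a (s.erase i))) :=
      sum_congr rfl fun i hi => by rw [erase_insert_of_ne (hne i hi).symm]
    rw [koszulD, sum_insert ha, koszulSign_insert_self, erase_insert ha, hsum] at hf
    rw [← koszulSign_smul_koszulSign_smul a s (D a (f s)), eq_neg_of_add_eq_zero_left hf,
      neg_smul, smul_neg]
  rw [hDa, map_zsmul, map_sum, smul_sum, koszulD]
  refine sum_congr rfl fun i hi => ?_
  have hai : a ∉ s.erase i := fun h => ha (mem_of_mem_erase h)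
  rw [koszulHomotopy, if_neg hai, map_zsmul, hDI_comm a i (hne i hi), map_zsmul, smul_smul,
    smul_smul, koszulSign_mul_koszulSign_erase ha hi, neg_mul]

lemma koszulD_koszulHomotopy (hDI : ∀ a m, D a (I a m) = m)
    (hDI_comm : ∀ a b, b ≠ a → ∀ m, D b (I a m) = I a (D b m))
    {f : Finset ι → M} (hf : koszulD D f = 0) (a : ι) :
    koszulD D (koszulHomotopy I a f) = f - koszulEliminate D I a f := by
  ext s
  by_cases ha : a ∈ s
  · rw [koszulD_koszulHomotopy_of_mem hDI ha, Pi.sub_apply, koszulEliminate_of_mem ha, sub_zero]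
  · rw [koszulD_koszulHomotopy_of_notMem hDI_comm ha (congr_fun hf _), Pi.sub_apply,
      koszulEliminate_of_notMem ha, sub_sub_cancel]

lemma koszulD_koszulEliminate (hDI : ∀ a m, D a (I a m) = m)
    (hDI_comm : ∀ a b, b ≠ a → ∀ m, D b (I a m) = I a (D b m))
    (hDD : ∀ a b m, D a (D b m) = D b (D a m))
    {f : Finset ι → M} (hf : koszulD D f = 0) (a : ι) :
    koszulD D (koszulEliminate D I a f) = 0 := by
  ext t
  by_cases ha : a ∈ t
  · refine sum_eq_zero fun i hi => ?_
    rcases eq_or_ne i a with rfl | hia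
    · rw [koszulEliminate_of_notMem (notMem_erase i t), map_sub, hDI, sub_self, smul_zero]
    · rw [koszulEliminate_of_mem (mem_erase.mpr ⟨hia.symm, ha⟩), map_zero, smul_zero]
  · have key : koszulD D (koszulEliminate D I a f) t =
        koszulD D f t - I a (D a (koszulD D f t)) := by
      simp only [koszulD, map_sum, map_zsmul, ← sum_sub_distrib, ← smul_sub]
      refine sum_congr rfl fun i hi => ?_
      have hia : i ≠ a := fun h => ha (h ▸ hi)
      rw [koszulEliminate_of_notMem (fun h => ha (mem_of_mem_erase h)), map_sub,
        hDI_comm a i hia, hDD i a]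
    rw [key, congr_fun hf t, Pi.zero_apply, map_zero, map_zero, sub_zero]

lemma koszulEliminate_empty {f : Finset ι → M} (hf : f ∅ = 0) (a : ι) :
    koszulEliminate D I a f ∅ = 0 := by
  rw [koszulEliminate_of_notMem (notMem_empty a), hf, map_zero, map_zero, sub_zero]

lemma koszulEliminate_eq_zero_of_not_subset {a : ι} {A : Finset ι} {f : Finset ι → M}
    (hf : ∀ s, ¬ s ⊆ insert a A → f s = 0) {s : Finset ι} (hs : ¬ s ⊆ A) :
    koszulEliminate D I a f s = 0 := by
  by_cases ha : a ∈ s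
  · exact koszulEliminate_of_mem ha f
  · rw [koszulEliminate_of_notMem ha, hf s fun h => hs ((subset_insert_iff_of_notMem ha).mp h),
      map_zero, map_zero, sub_zero]

theorem exists_koszulD_eq_of_support_subset (hDI : ∀ a m, D a (I a m) = m)
    (hDI_comm : ∀ a b, b ≠ a → ∀ m, D b (I a m) = I a (D b m))
    (hDD : ∀ a b m, D a (D b m) = D b (D a m)) (A : Finset ι) {f : Finset ι → M}
    (hf : koszulD D f = 0) (hf₀ : f ∅ = 0) (hA : ∀ s, ¬ s ⊆ A → f s = 0) :
    ∃ g, koszulD D g = f := by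
  induction A using Finset.induction_on generalizing f with
  | empty =>
    have : f = 0 := funext fun s => by
      rcases eq_or_ne s ∅ with rfl | hs
      · exact hf₀
      · exact hA s (fun h => hs (subset_empty.mp h))
    exact ⟨0, by subst this; exact hf⟩
  | insert a A _ ih =>
    obtain ⟨g, hg⟩ := ih (koszulD_koszulEliminate hDI hDI_comm hDD hf a)
      (koszulEliminate_empty hf₀ a) fun s => koszulEliminate_eq_zero_of_not_subset hA
    exact ⟨koszulHomotopy I a f + g, by
      rw [koszulD_add, hg, koszulD_koszulHomotopy hDI hDI_comm hf, sub_add_cancel]⟩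

theorem exists_koszulD_eq [Fintype ι] (hDI : ∀ a m, D a (I a m) = m)
    (hDI_comm : ∀ a b, b ≠ a → ∀ m, D b (I a m) = I a (D b m))
    (hDD : ∀ a b m, D a (D b m) = D b (D a m)) {f : Finset ι → M}
    (hf : koszulD D f = 0) (hf₀ : f ∅ = 0) : ∃ g, koszulD D g = f :=
  exists_koszulD_eq_of_support_subset hDI hDI_comm hDD univ hf hf₀ fun s hs =>
    absurd (subset_univ s) hs

end Koszul

section DeRham

open Finset

variable {M : Type*} [AddCommGroup M] {d : ℕ}

lemma connDeRhamD_apply (D : Fin d → M →+ M) {k : ℕ} (ω : {s : Finset (Fin d) // #s = k} → M)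
    {s : Finset (Fin d)} (hs : #s = k + 1) :
    connDeRhamD D ω ⟨s, hs⟩ = koszulD D (Function.extend Subtype.val ω 0) s := by
  rw [connDeRhamD, koszulD, ← sum_attach s]
  refine sum_congr rfl fun i _ => ?_
  rw [Function.extend_val_apply]
  rfl

lemma connDeRhamD_eq_zero_iff (D : Fin d → M →+ M) (ω : {s : Finset (Fin d) // #s = 0} → M) :
    connDeRhamD D ω = 0 ↔ ∀ i, D i (ω ⟨∅, card_empty⟩) = 0 := by
  have hsingle : ∀ i (h : #{i} = 0 + 1),
      connDeRhamD D ω ⟨{i}, h⟩ = D i (ω ⟨∅, card_empty⟩) := by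
    intro i h
    rw [connDeRhamD_apply, koszulD, sum_singleton, erase_singleton,
      Function.extend_val_apply (b := ∅) card_empty]
    simp [koszulSign, filter_singleton]
  constructor
  · intro h i
    rw [← hsingle i (card_singleton i), h, Pi.zero_apply]
  · intro h
    ext ⟨s, hs⟩
    obtain ⟨i, rfl⟩ := card_eq_one.mp hs
    rw [hsingle, h, Pi.zero_apply]

theorem exists_connDeRhamD_eq {D I : Fin d → M →+ M} (hDI : ∀ a m, D a (I a m) = m)
    (hDI_comm : ∀ a b, b ≠ a → ∀ m, D b (I a m) = I a (D b m))
    (hDD : ∀ a b m, D a (D b m) = D b (D a m)) {k : ℕ}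
    {ω : {s : Finset (Fin d) // #s = k + 1} → M} (hω : connDeRhamD D ω = 0) :
    ∃ η : {s : Finset (Fin d) // #s = k} → M, connDeRhamD D η = ω := by
  set f := Function.extend Subtype.val ω 0
  have hf_card : ∀ t : Finset (Fin d), #t ≠ k + 1 → f t = 0 := fun t ht =>
    Function.extend_val_apply' ht
  have hf : koszulD D f = 0 := by
    ext s
    by_cases hs : #s = k + 1 + 1
    · rw [← connDeRhamD_apply D ω hs, hω, Pi.zero_apply, Pi.zero_apply]
    · exact koszulD_apply_eq_zero_of_card D hf_card hs
  obtain ⟨g, hg⟩ := exists_koszulD_eq hDI hDI_comm hDD hf (hf_card ∅ (by simp))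
  refine ⟨fun t => g t, ?_⟩
  ext ⟨s, hs⟩
  have hg_card : ∀ t : Finset (Fin d), #t = k →
      Function.extend Subtype.val (fun t : {t // #t = k} => g t) 0 t = g t :=
    fun t ht => Function.extend_val_apply (b := t) ht
  rw [connDeRhamD_apply, koszulD_congr_of_card hg_card hs, hg]
  exact Function.extend_val_apply (b := s) hs

end DeRham

theorem de_rham_complex_of_nilpotent_connection_quasi_iso_general
    {R : Type*} [CommRing R] [Algebra ℚ R] (d : ℕ)
    {M : Type*} [AddCommGroup M] [Module (MvPolynomial (Fin d) R) M]
    (D : Fin d → M →+ M)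
    (hleib : ∀ i (f : MvPolynomial (Fin d) R) (m : M),
      D i (f • m) = (MvPolynomial.pderiv i f) • m + f • D i m)
    (hcomm : ∀ i j, (D i).comp (D j) = (D j).comp (D i))
    (hnilp : ∀ (m : M) i, ∃ k, (D i)^[k] m = 0) :
    -- `H⁰(DR(M,∇)) = M^{∇=0}`
    (∀ ω : {s : Finset (Fin d) // s.card = 0} → M,
      connDeRhamD D ω = 0 ↔ ∀ i, D i (ω ⟨∅, Finset.card_empty⟩) = 0) ∧
    -- `Hⁱ(DR(M,∇)) = 0` for `i > 0`
    (∀ k : ℕ, ∀ ω : {s : Finset (Fin d) // s.card = k + 1} → M,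
      connDeRhamD D ω = 0 →
        ∃ η : {s : Finset (Fin d) // s.card = k} → M, connDeRhamD D η = ω) := by
  have hDD : ∀ a b m, D a (D b m) = D b (D a m) := fun a b m => DFunLike.congr_fun (hcomm a b) m
  set I := fun a => antideriv R (D a) (fun m => hnilp m a) a
  have hDI : ∀ a m, D a (I a m) = m := fun a => apply_antideriv _ (hleib a)
  have hDI_comm : ∀ a b, b ≠ a → ∀ m, D b (I a m) = I a (D b m) := fun a b hab =>
    antideriv_commute _ hab (hleib b) fun m => hDD b a m
  exact ⟨connDeRhamD_eq_zero_iff D, fun k ω hω => exists_connDeRhamD_eq hDI hDI_comm hDD hω⟩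

/-- for a finite projective module `M` over `B = R⟨V₁,…,V_d⟩` with an
integrable nilpotent connection `∇`, the de Rham complex `DR(M,∇)` is quasi-isomorphic
to the flat sections `M^{∇=0}` in degree `0`: `H⁰ = M^{∇=0}` and `Hⁱ = 0` for `i > 0`. -/
theorem de_rham_complex_of_nilpotent_connection_quasi_iso
    {R : Type*} [CommRing R] [Algebra ℚ R] (d : ℕ)
    {M : Type*} [AddCommGroup M] [Module (MvPolynomial (Fin d) R) M]
    [Module.Finite (MvPolynomial (Fin d) R) M]
    [Module.Projective (MvPolynomial (Fin d) R) M]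
    (D : Fin d → M →+ M)
    (hleib : ∀ i (f : MvPolynomial (Fin d) R) (m : M),
      D i (f • m) = (MvPolynomial.pderiv i f) • m + f • D i m)
    (hcomm : ∀ i j, (D i).comp (D j) = (D j).comp (D i))
    (hnilp : ∀ (m : M) i, ∃ k, (D i)^[k] m = 0) :
    -- `H⁰(DR(M,∇)) = M^{∇=0}`
    (∀ ω : {s : Finset (Fin d) // s.card = 0} → M,
      connDeRhamD D ω = 0 ↔ ∀ i, D i (ω ⟨∅, Finset.card_empty⟩) = 0) ∧
    -- `Hⁱ(DR(M,∇)) = 0` for `i > 0`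
    (∀ k : ℕ, ∀ ω : {s : Finset (Fin d) // s.card = k + 1} → M,
      connDeRhamD D ω = 0 →
        ∃ η : {s : Finset (Fin d) // s.card = k} → M, connDeRhamD D η = ω) :=
  de_rham_complex_of_nilpotent_connection_quasi_iso_general d D hleib hcomm hnilp
end
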